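/- Let T be an inverse semigroup and U a right inverse T-set. The semigroup K(U) of rank-one maps ω_{u,u'} under composition is an inverse semigroup, with the generalized inverse of ω_{u,u'} equal to ω_{u',u}. -/
import Mathlib


/-- An inverse semigroup: a semigroup in which every element has a unique
generalized inverse `star s`. -/
class InverseSemigroup (S : Type*) extends Semigroup S where
  star : S → S
  mul_star_mul : ∀ s : S, s * star s * s = s
  star_mul_star : ∀ s : S, star s * s * star s = star s
  star_unique : ∀ s t : S, s * t * s = s → t * s * t = t → t = star s

postfix:max "⋆" => InverseSemigroup.star

/-- A right regular `T`-set over an inverse semigroup `T`. -/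
structure RightRegularSet (T : Type*) [InverseSemigroup T] (U : Type*) where
  act : U → T → U
  act_act : ∀ (u : U) (t t' : T), act (act u t) t' = act u (t * t')
  pair : U → U → T
  pair_act : ∀ (u u' : U) (t : T), pair u (act u' t) = pair u u' * t
  pair_star : ∀ u u' : U, (pair u u')⋆ = pair u' u
  act_pair_self : ∀ u : U, act u (pair u u) = u

/-- Condition (R-iv): the right regular `T`-set is a right inverse `T`-set. -/
def RightRegularSet.IsInverse {T : Type*} [InverseSemigroup T] {U : Type*}
    (M : RightRegularSet T U) : Prop :=
  ∀ u u' : U, M.act u (M.pair u' u) = u → M.act u' (M.pair u u') = u' → u = u'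

/-- The rank-one map `ω_{v,u} : U → V`, `ω_{v,u}(u') = v [u, u']`. -/
def omega {T : Type*} [InverseSemigroup T] {U V : Type*}
    (MU : RightRegularSet T U) (MV : RightRegularSet T V) (v : V) (u : U) :
    U → V :=
  fun w => MV.act v (MU.pair u w)

namespace INV

variable {T : Type*} [InverseSemigroup T]

lemma sms (s : T) : s * s⋆ * s = s := InverseSemigroup.mul_star_mul s
lemma sms' (s : T) : s⋆ * s * s⋆ = s⋆ := InverseSemigroup.star_mul_star s

lemma is_star_star (s : T) : s⋆⋆ = s :=
  (InverseSemigroup.star_unique s⋆ s (sms' s) (sms s)).symm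

lemma idem_star {e : T} (h : e * e = e) : e⋆ = e :=
  (InverseSemigroup.star_unique e e (by rw [h, h]) (by rw [h, h])).symm

lemma mul_star_idem (t : T) : (t * t⋆) * (t * t⋆) = t * t⋆ := by
  rw [← mul_assoc, sms]

lemma star_mul_idem (t : T) : (t⋆ * t) * (t⋆ * t) = t⋆ * t := by
  rw [← mul_assoc, sms']

lemma mul_idem {e f : T} (he : e * e = e) (hf : f * f = f) :
    (e * f) * (e * f) = e * f := by
  have A : (e*f) * (f*(e*f)⋆*e) * (e*f) = e*f := by
    calc (e*f) * (f*(e*f)⋆*e) * (e*f)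
        = e*((f*f)*((e*f)⋆*((e*e)*f))) := by simp only [mul_assoc]
      _ = e*(f*((e*f)⋆*(e*f))) := by rw [he, hf]
      _ = (e*f)*(e*f)⋆*(e*f) := by simp only [mul_assoc]
      _ = e*f := sms (e*f)
  have B : (f*(e*f)⋆*e) * (e*f) * (f*(e*f)⋆*e) = f*(e*f)⋆*e := by
    calc (f*(e*f)⋆*e) * (e*f) * (f*(e*f)⋆*e)
        = f*((e*f)⋆*((e*e)*((f*f)*((e*f)⋆*e)))) := by simp only [mul_assoc]
      _ = f*((e*f)⋆*(e*(f*((e*f)⋆*e)))) := by rw [he, hf]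
      _ = f*((e*f)⋆*(e*f)*(e*f)⋆*e) := by simp only [mul_assoc]
      _ = f*((e*f)⋆*e) := by rw [sms' (e*f)]
      _ = f*(e*f)⋆*e := by rw [mul_assoc]
  have hfxe : f*(e*f)⋆*e = (e*f)⋆ := InverseSemigroup.star_unique (e*f) (f*(e*f)⋆*e) A B
  have hxx : (e*f)⋆ * (e*f)⋆ = (e*f)⋆ := by
    calc (e*f)⋆ * (e*f)⋆ = (f*(e*f)⋆*e) * (f*(e*f)⋆*e) := by rw [hfxe]
      _ = f*((e*f)⋆*((e*f)*((e*f)⋆*e))) := by simp only [mul_assoc]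
      _ = f*((e*f)⋆*(e*f)*(e*f)⋆*e) := by simp only [mul_assoc]
      _ = f*((e*f)⋆*e) := by rw [sms' (e*f)]
      _ = f*(e*f)⋆*e := by rw [mul_assoc]
      _ = (e*f)⋆ := hfxe
  have hef : e*f = (e*f)⋆ := (is_star_star (e*f)).symm.trans (idem_star hxx)
  rw [hef]; exact hxx

lemma idem_comm {e f : T} (he : e * e = e) (hf : f * f = f) : e * f = f * e := by
  have hef : (e*f)*(e*f) = e*f := mul_idem he hf
  have hfe : (f*e)*(f*e) = f*e := mul_idem hf he
  have A : (e*f)*(f*e)*(e*f) = e*f := by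
    calc (e*f)*(f*e)*(e*f) = e*((f*f)*((e*e)*f)) := by simp only [mul_assoc]
      _ = e*(f*(e*f)) := by rw [he, hf]
      _ = (e*f)*(e*f) := by simp only [mul_assoc]
      _ = e*f := hef
  have B : (f*e)*(e*f)*(f*e) = f*e := by
    calc (f*e)*(e*f)*(f*e) = f*((e*e)*((f*f)*e)) := by simp only [mul_assoc]
      _ = f*(e*(f*e)) := by rw [he, hf]
      _ = (f*e)*(f*e) := by simp only [mul_assoc]
      _ = f*e := hfe
  exact ((InverseSemigroup.star_unique (e*f) (f*e) A B).trans (idem_star hef)).symm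

lemma star_mul (s t : T) : (s * t)⋆ = t⋆ * s⋆ := by
  have h1 : (s*t)*(t⋆*s⋆)*(s*t) = s*t := by
    calc (s*t)*(t⋆*s⋆)*(s*t) = s*((t*t⋆)*(s⋆*s)*t) := by simp only [mul_assoc]
      _ = s*((s⋆*s)*(t*t⋆)*t) := by rw [idem_comm (mul_star_idem t) (star_mul_idem s)]
      _ = (s*s⋆*s)*(t*t⋆*t) := by simp only [mul_assoc]
      _ = s*t := by rw [sms, sms]
  have h2 : (t⋆*s⋆)*(s*t)*(t⋆*s⋆) = t⋆*s⋆ := by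
    calc (t⋆*s⋆)*(s*t)*(t⋆*s⋆) = t⋆*((s⋆*s)*(t*t⋆)*s⋆) := by simp only [mul_assoc]
      _ = t⋆*((t*t⋆)*(s⋆*s)*s⋆) := by rw [← idem_comm (mul_star_idem t) (star_mul_idem s)]
      _ = (t⋆*t*t⋆)*(s⋆*s*s⋆) := by simp only [mul_assoc]
      _ = t⋆*s⋆ := by rw [sms', sms']
  exact (InverseSemigroup.star_unique (s*t) (t⋆*s⋆) h1 h2).symm

variable {U : Type*} (M : RightRegularSet T U)

lemma pair_sss (x y : U) : M.pair x y * (M.pair y x * M.pair x y) = M.pair x y := by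
  rw [← M.pair_star x y, ← mul_assoc]
  exact sms (M.pair x y)

lemma pairQ_idem (x y : U) :
    (M.pair x y * M.pair y x) * (M.pair x y * M.pair y x) = M.pair x y * M.pair y x := by
  simp only [mul_assoc]
  rw [pair_sss M y x]

lemma pair_left_e (x w : U) : M.pair x x * M.pair x w = M.pair x w := by
  have h : M.pair w x * M.pair x x = M.pair w x := by
    rw [← M.pair_act w x (M.pair x x), M.act_pair_self]
  calc M.pair x x * M.pair x w = ((M.pair x x * M.pair x w)⋆)⋆ := (is_star_star _).symm
    _ = ((M.pair x w)⋆ * (M.pair x x)⋆)⋆ := by rw [star_mul]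
    _ = (M.pair w x * M.pair x x)⋆ := by rw [M.pair_star x w, M.pair_star x x]
    _ = (M.pair w x)⋆ := by rw [h]
    _ = M.pair x w := M.pair_star w x

lemma act_congr (x : U) {s s' : T} (h : M.pair x x * s = M.pair x x * s') :
    M.act x s = M.act x s' := by
  have h2 : M.act x (M.pair x x * s) = M.act x (M.pair x x * s') := by rw [h]
  rwa [← M.act_act, ← M.act_act, M.act_pair_self] at h2

lemma pair_act_left (t : T) (x y : U) : M.pair (M.act x t) y = t⋆ * M.pair x y := by
  have h1 : M.pair (M.act x t) y = (M.pair y (M.act x t))⋆ := (M.pair_star _ _).symm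
  rw [h1, M.pair_act, star_mul, M.pair_star]

lemma L_proj (hM : M.IsInverse) (d w : U) :
    M.act d (M.pair d w) = M.act w (M.pair w d * M.pair d w) := by
  have hQs : (M.pair w d * M.pair d w)⋆ = M.pair w d * M.pair d w := by
    rw [star_mul, M.pair_star, M.pair_star]
  have hQQ : (M.pair w d * M.pair d w) * (M.pair w d * M.pair d w)
      = M.pair w d * M.pair d w := pairQ_idem M w d
  refine hM (M.act d (M.pair d w)) (M.act w (M.pair w d * M.pair d w)) ?_ ?_
  · rw [M.act_act, pair_act_left, hQs, M.pair_act, hQQ, pair_sss M d w]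
  · rw [M.act_act, pair_act_left, M.pair_star, M.pair_act, pair_sss M d w, hQQ]

lemma KEY (hM : M.IsInverse) (x y z : U) :
    M.pair x y * M.pair y z = M.pair x z * (M.pair z y * M.pair y z) := by
  rw [← M.pair_act x y (M.pair y z), L_proj M hM y z, M.pair_act x z]

lemma dualKEY (hM : M.IsInverse) (x y z : U) :
    M.pair x y * M.pair y z = M.pair x y * (M.pair y x * M.pair x z) := by
  have h := congrArg InverseSemigroup.star (KEY M hM z y x)
  simpa only [star_mul, M.pair_star, mul_assoc] using h

lemma AT_core (hM : M.IsInverse) (a b u u' : U)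
    (H : ∀ γ v, M.pair γ a * (M.pair b u * (M.pair u' a * M.pair b v))
        = M.pair γ a * M.pair b v) (w : U) :
    M.pair a a * (M.pair b w * (M.pair w u * (M.pair u' a * M.pair b w)))
      = M.pair a a * M.pair b w := by
  have Hu'w := H u' w
  have Hu'u := H u' u
  have Haw := H a w
  have ctxdk : ∀ r : T, M.pair b w * (M.pair w u * r)
      = M.pair b w * (M.pair w b * (M.pair b u * r)) := by
    intro r
    have h := congrArg (· * r) (dualKEY M hM b w u)
    simpa only [mul_assoc] using h
  have ctxE : ∀ r : T, M.pair u' a * (M.pair b u * (M.pair u' a * (M.pair b u * r)))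
      = M.pair u' a * (M.pair b u * r) := by
    intro r
    have h := congrArg (· * r) Hu'u
    simpa only [mul_assoc] using h
  have hEE : (M.pair b u * (M.pair u' a * (M.pair b u * M.pair u' a)))
      * (M.pair b u * (M.pair u' a * (M.pair b u * M.pair u' a)))
      = M.pair b u * (M.pair u' a * (M.pair b u * M.pair u' a)) := by
    simp only [mul_assoc]
    rw [ctxE, ctxE]
  have hVV := pairQ_idem M b w
  have hcomm := idem_comm hVV hEE
  have ctxcomm : ∀ r : T,
      M.pair b w * (M.pair w b * (M.pair b u * (M.pair u' a * (M.pair b u * (M.pair u' a * r)))))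
      = M.pair b u * (M.pair u' a * (M.pair b u * (M.pair u' a * (M.pair b w * (M.pair w b * r))))) := by
    intro r
    have h := congrArg (· * r) hcomm
    simpa only [mul_assoc] using h
  calc M.pair a a * (M.pair b w * (M.pair w u * (M.pair u' a * M.pair b w)))
      = M.pair a a * (M.pair b w * (M.pair w b * (M.pair b u * (M.pair u' a * M.pair b w)))) := by
        rw [ctxdk]
    _ = M.pair a a * (M.pair b w * (M.pair w b * (M.pair b u *
          (M.pair u' a * (M.pair b u * (M.pair u' a * M.pair b w)))))) := by
        conv_lhs => rw [← Hu'w]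
    _ = M.pair a a * (M.pair b u * (M.pair u' a * (M.pair b u *
          (M.pair u' a * (M.pair b w * (M.pair w b * M.pair b w)))))) := by
        rw [ctxcomm]
    _ = M.pair a a * (M.pair b u * (M.pair u' a * (M.pair b u *
          (M.pair u' a * M.pair b w)))) := by
        rw [pair_sss M b w]
    _ = M.pair a a * (M.pair b u * (M.pair u' a * M.pair b w)) := by rw [Hu'w]
    _ = M.pair a a * M.pair b w := Haw

lemma regular (u u' : U) :
    omega M M u u' ∘ omega M M u' u ∘ omega M M u u' = omega M M u u' := by
  funext w
  show M.act u (M.pair u' (M.act u' (M.pair u (M.act u (M.pair u' w)))))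
      = M.act u (M.pair u' w)
  rw [M.pair_act, M.pair_act]
  refine act_congr M u ?_
  have he := pair_left_e M u u
  have hf := pair_left_e M u' u'
  have hc := idem_comm he hf
  calc M.pair u u * (M.pair u' u' * (M.pair u u * M.pair u' w))
      = ((M.pair u u * M.pair u' u') * M.pair u u) * M.pair u' w := by simp only [mul_assoc]
    _ = ((M.pair u' u' * M.pair u u) * M.pair u u) * M.pair u' w := by rw [hc]
    _ = (M.pair u' u' * (M.pair u u * M.pair u u)) * M.pair u' w := by
        rw [mul_assoc (M.pair u' u') (M.pair u u) (M.pair u u)]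
    _ = (M.pair u' u' * M.pair u u) * M.pair u' w := by rw [he]
    _ = (M.pair u u * M.pair u' u') * M.pair u' w := by rw [← hc]
    _ = M.pair u u * (M.pair u' u' * M.pair u' w) := by rw [mul_assoc]
    _ = M.pair u u * M.pair u' w := by rw [pair_left_e M u' w]

end INV

theorem stmt14 {T : Type*} [InverseSemigroup T] {U : Type*}
    (M : RightRegularSet T U) (hM : M.IsInverse) (u u' : U) :
    omega M M u u' ∘ omega M M u' u ∘ omega M M u u' = omega M M u u' ∧
    omega M M u' u ∘ omega M M u u' ∘ omega M M u' u = omega M M u' u ∧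
    (∀ a b : U,
      omega M M u u' ∘ omega M M a b ∘ omega M M u u' = omega M M u u' →
      omega M M a b ∘ omega M M u u' ∘ omega M M a b = omega M M a b →
      omega M M a b = omega M M u' u) := by
  refine ⟨INV.regular M u u', INV.regular M u' u, ?_⟩
  intro a b h1 h2
  funext w
  show M.act a (M.pair b w) = M.act u' (M.pair u w)
  have H2 : ∀ v, M.act a (M.pair b u * (M.pair u' a * M.pair b v))
      = M.act a (M.pair b v) := by
    intro v
    have h' : M.act a (M.pair b (M.act u (M.pair u' (M.act a (M.pair b v)))))
        = M.act a (M.pair b v) := congrFun h2 v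
    rw [M.pair_act, M.pair_act] at h'
    exact h'
  have H2T : ∀ γ v, M.pair γ a * (M.pair b u * (M.pair u' a * M.pair b v))
      = M.pair γ a * M.pair b v := by
    intro γ v
    have h' := congrArg (M.pair γ) (H2 v)
    rw [M.pair_act, M.pair_act] at h'
    exact h'
  have H1 : ∀ v, M.act u (M.pair u' a * (M.pair b u * M.pair u' v))
      = M.act u (M.pair u' v) := by
    intro v
    have h' : M.act u (M.pair u' (M.act a (M.pair b (M.act u (M.pair u' v)))))
        = M.act u (M.pair u' v) := congrFun h1 v
    rw [M.pair_act, M.pair_act] at h'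
    exact h'
  have SH1 : ∀ γ v, M.pair γ u' * (M.pair u b * (M.pair a u' * M.pair u v))
      = M.pair γ u' * M.pair u v := by
    intro γ v
    have h' := congrArg (fun z => M.pair z v) (H1 γ)
    simp only [INV.pair_act_left, INV.star_mul, M.pair_star, mul_assoc] at h'
    exact h'
  have hp : M.act (M.act a (M.pair b w))
      (M.pair (M.act u' (M.pair u w)) (M.act a (M.pair b w))) = M.act a (M.pair b w) := by
    rw [M.act_act, INV.pair_act_left, M.pair_star, M.pair_act]
    exact INV.act_congr M a (INV.AT_core M hM a b u u' H2T w)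
  have hq : M.act (M.act u' (M.pair u w))
      (M.pair (M.act a (M.pair b w)) (M.act u' (M.pair u w))) = M.act u' (M.pair u w) := by
    rw [M.act_act, INV.pair_act_left, M.pair_star, M.pair_act]
    exact INV.act_congr M u' (INV.AT_core M hM u' u b a SH1 w)
  exact hM _ _ hp hq
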